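/- Let (H,R) be a braided bialgebra over a field k, let φ : H → H be a bialgebra automorphism with (φ⊗φ)(R) = R, and let K ∈ H be an invertible element satisfying Δ(K) = (K⊗1)·(id⊗φ)(R)·(1⊗K)·R_21 in H⊗H. Then the φ-twisted reflection equation holds: (K⊗1)·(id⊗φ)(R)·(1⊗K)·R_21 = R·(1⊗K)·(φ⊗id)(R_21)·(K⊗1) in H⊗H. -/

import Mathlib

/- Braided bialgebras: basic tensor-leg maps and the universal R-matrix axioms. -/

open scoped TensorProduct

noncomputable section

variable (k H : Type*) [Field k] [Ring H] [Bialgebra k H]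

/-- The flip `a ⊗ b ↦ b ⊗ a` on `H ⊗[k] H`, as an algebra homomorphism. -/
def tflip : H ⊗[k] H →ₐ[k] H ⊗[k] H := (Algebra.TensorProduct.comm k H H).toAlgHom

/-- `s ⊗ t ↦ s ⊗ t ⊗ 1 : H ⊗ H → H ⊗ H ⊗ H`. -/
def leg12 : H ⊗[k] H →ₐ[k] H ⊗[k] (H ⊗[k] H) :=
  Algebra.TensorProduct.map (AlgHom.id k H) Algebra.TensorProduct.includeLeft

/-- `s ⊗ t ↦ s ⊗ 1 ⊗ t : H ⊗ H → H ⊗ H ⊗ H`. -/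
def leg13 : H ⊗[k] H →ₐ[k] H ⊗[k] (H ⊗[k] H) :=
  Algebra.TensorProduct.map (AlgHom.id k H) Algebra.TensorProduct.includeRight

/-- `s ⊗ t ↦ 1 ⊗ s ⊗ t : H ⊗ H → H ⊗ H ⊗ H`. -/
def leg23 : H ⊗[k] H →ₐ[k] H ⊗[k] (H ⊗[k] H) :=
  Algebra.TensorProduct.includeRight

/-- `Δ ⊗ id : H ⊗ H → H ⊗ H ⊗ H`. -/
def comulLeft : H ⊗[k] H →ₐ[k] H ⊗[k] (H ⊗[k] H) :=
  (Algebra.TensorProduct.assoc k k k H H H).toAlgHom.comp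
    (Algebra.TensorProduct.map (Bialgebra.comulAlgHom k H) (AlgHom.id k H))

/-- `id ⊗ Δ : H ⊗ H → H ⊗ H ⊗ H`. -/
def comulRight : H ⊗[k] H →ₐ[k] H ⊗[k] (H ⊗[k] H) :=
  Algebra.TensorProduct.map (AlgHom.id k H) (Bialgebra.comulAlgHom k H)

/-- `(H, R)` is a braided bialgebra with `R⁻¹ = Rinv`:  `R` is an invertible element of
`H ⊗ H` satisfying `Δ(x) · R = R · Δ^op(x)` for all `x` and the two hexagon identities
`(Δ ⊗ id)(R) = R₂₃ · R₁₃` and `(id ⊗ Δ)(R) = R₁₂ · R₁₃`. -/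
def IsUniversalRMatrix (R Rinv : H ⊗[k] H) : Prop :=
  R * Rinv = 1 ∧ Rinv * R = 1 ∧
  (∀ x : H, Bialgebra.comulAlgHom k H x * R = R * tflip k H (Bialgebra.comulAlgHom k H x)) ∧
  comulLeft k H R = leg23 k H R * leg13 k H R ∧
  comulRight k H R = leg12 k H R * leg13 k H R

/-
Quasi-cocommutativity `Δ(K) · R = R · Δ^op(K)` applied to `K` already gives the equation: flipping
the factorisation of `Δ(K)` leg by leg yields `Δ^op(K) = (1 ⊗ K) · (φ ⊗ id)(R₂₁) · (K ⊗ 1) · R`,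
and the trailing `R` cancels because `R` is invertible.
-/

section Flip

variable {k H}

lemma tflip_tmul (a b : H) : tflip k H (a ⊗ₜ[k] b) = b ⊗ₜ[k] a := rfl

lemma tflip_tflip (x : H ⊗[k] H) : tflip k H (tflip k H x) = x :=
  TensorProduct.comm_comm k H H x

lemma tflip_map (f g : H →ₐ[k] H) (x : H ⊗[k] H) :
    tflip k H (Algebra.TensorProduct.map f g x)
      = Algebra.TensorProduct.map g f (tflip k H x) := by
  induction x using TensorProduct.induction_on with
  | zero => simp only [map_zero]
  | tmul a b => rfl
  | add x y hx hy => simp only [map_add, hx, hy]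

end Flip

namespace IsUniversalRMatrix

variable {k H} {R Rinv : H ⊗[k] H}

lemma isUnit (hR : IsUniversalRMatrix k H R Rinv) : IsUnit R :=
  ⟨⟨R, Rinv, hR.1, hR.2.1⟩, rfl⟩

lemma comul_mul (hR : IsUniversalRMatrix k H R Rinv) (x : H) :
    Bialgebra.comulAlgHom k H x * R = R * tflip k H (Bialgebra.comulAlgHom k H x) :=
  hR.2.2.1 x

end IsUniversalRMatrix

theorem phi_universal_K_matrix_satisfies_twisted_reflection_equation
    (R Rinv : H ⊗[k] H) (hR : IsUniversalRMatrix k H R Rinv)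
    (φ : H ≃ₐc[k] H)
    (K : H)
    (hΔK : Bialgebra.comulAlgHom k H K =
      (K ⊗ₜ[k] (1 : H)) *
        Algebra.TensorProduct.map (AlgHom.id k H) (φ.toBialgHom : H →ₐ[k] H) R *
        ((1 : H) ⊗ₜ[k] K) * tflip k H R) :
    (K ⊗ₜ[k] (1 : H)) *
        Algebra.TensorProduct.map (AlgHom.id k H) (φ.toBialgHom : H →ₐ[k] H) R *
        ((1 : H) ⊗ₜ[k] K) * tflip k H R
      = R * ((1 : H) ⊗ₜ[k] K) *
          Algebra.TensorProduct.map (φ.toBialgHom : H →ₐ[k] H) (AlgHom.id k H)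
            (tflip k H R) *
          (K ⊗ₜ[k] (1 : H)) := by
  have hΔopK : tflip k H (Bialgebra.comulAlgHom k H K)
      = ((1 : H) ⊗ₜ[k] K) *
          Algebra.TensorProduct.map (φ.toBialgHom : H →ₐ[k] H) (AlgHom.id k H) (tflip k H R) *
          (K ⊗ₜ[k] (1 : H)) * R := by
    rw [hΔK]
    simp only [map_mul, tflip_tmul, tflip_map, tflip_tflip]
  have h := hR.comul_mul K
  rw [hΔopK, hΔK] at h
  simp only [← mul_assoc] at h
  exact hR.isUnit.mul_left_inj.1 h
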